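/- Let Y be a finite-rank subgroup of K^×. Then Y is strong (in K^×, with respect to G) if and only if for every finite tuple g₁, …, g_k of elements of G one has δ(Y·⟨g₁, …, g_k⟩) ≥ δ(Y), where Y·⟨g₁, …, g_k⟩ denotes the subgroup of K^× generated by Y and g₁, …, g_k. (Strongness can be checked on green points.) -/

import Mathlib

noncomputable section

namespace GreenPoints

variable {K : Type*} [Field K] [CharZero K]

/-- The rank of a (multiplicative) subgroup of `Kˣ`: the ℤ-module rank of the
underlying abelian group, i.e. the dimension over ℚ of `S ⊗ ℚ`. -/
def grpRank (S : Subgroup Kˣ) : Cardinal := Module.rank ℤ (Additive S)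

/-- A subgroup of `Kˣ` has finite rank. -/
def FiniteRank (S : Subgroup Kˣ) : Prop := grpRank S < Cardinal.aleph0

/-- The transcendence degree over ℚ of the subfield of `K` generated by a subset `s` of `K`:
the supremum of the cardinalities of subsets of `s` that are algebraically
independent over ℚ. -/
def tdSet (s : Set K) : Cardinal :=
  ⨆ t : {t : Set K // t ⊆ s ∧ AlgebraicIndependent ℚ ((↑) : t → K)}, Cardinal.mk t.1

/-- The transcendence degree over ℚ of the subfield of `K` generated by a subgroup of `Kˣ`. -/
def td (S : Subgroup Kˣ) : Cardinal := tdSet (Units.val '' (S : Set Kˣ))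

/-- The predimension `δ(S) = 2·td(S) − rk(S ∩ G)` (with respect to the subgroup `G`
of green points). -/
def delta (G S : Subgroup Kˣ) : ℤ :=
  2 * ((td S).toNat : ℤ) - ((grpRank (S ⊓ G)).toNat : ℤ)

/-- `Y` is strong in `T` (with respect to `G`): `δ(W) ≥ δ(Y)` for every finite-rank
subgroup `W` with `Y ⊆ W ⊆ T`. -/
def StrongIn (G Y T : Subgroup Kˣ) : Prop :=
  ∀ W : Subgroup Kˣ, FiniteRank W → Y ≤ W → W ≤ T → delta G Y ≤ delta G W

/-- `Y` is strong: strong in `Kˣ`. -/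
def Strong (G Y : Subgroup Kˣ) : Prop := StrongIn G Y ⊤

/-- A subgroup `S` of `Kˣ` is root-closed: `x ∈ S` whenever `x^n ∈ S` for some `n ≥ 1`. -/
def RootClosed (S : Subgroup Kˣ) : Prop :=
  ∀ (x : Kˣ) (n : ℕ), 1 ≤ n → x ^ n ∈ S → x ∈ S

/-- The subfield of `K` generated by a subgroup of `Kˣ`. -/
def fieldOf (S : Subgroup Kˣ) : Subfield K := Subfield.closure (Units.val '' (S : Set Kˣ))

/-! The forward direction holds because adjoining finitely many points keeps the rank finite.
Conversely, given a finite-rank `W ⊇ Y`, pick finitely many `gᵢ ∈ W ∩ G` generating a subgroup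
of the same rank as `W ∩ G`, and put `V = Y·⟨g⟩ ⊆ W`. Then `rk(V ∩ G) = rk(W ∩ G)` and
`td(V) ≤ td(W)`, so `δ(Y) ≤ δ(V) ≤ δ(W)`. The comparison of the transcendence degrees needs
`td(W)` to be finite; this follows from `td ≤ rk`, since algebraically independent units are
multiplicatively independent. -/

open Cardinal Submodule

theorem _root_.Submodule.exists_finite_subset_rank_le_rank_span {R M : Type*} [CommRing R]
    [IsDomain R] [AddCommGroup M] [Module R M] (P : Submodule R M)
    (hP : Module.rank R P < ℵ₀) :
    ∃ s : Set M, s.Finite ∧ s ⊆ P ∧ Module.rank R P ≤ Module.rank R (span R s) := by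
  obtain ⟨b, hb_card, hb⟩ := exists_set_linearIndependent_of_isDomain R P
  have hb_fin : b.Finite := lt_aleph0_iff_set_finite.1 (hb_card ▸ hP)
  refine ⟨P.subtype '' b, hb_fin.image _, Set.image_subset_iff.2 fun x _ => x.2, ?_⟩
  rw [rank_span_set (hb.image (by simp)), mk_image_eq P.injective_subtype, hb_card]

open MvPolynomial in
theorem _root_.AlgebraicIndependent.linearIndependent_ofMul_units {ι R A : Type*} [CommRing R]
    [Nontrivial R] [CommRing A] [Algebra R A] {x : ι → Aˣ}
    (hx : AlgebraicIndependent R fun i => (x i : A)) :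
    LinearIndependent ℤ fun i => Additive.ofMul (x i) := by
  classical
  rw [linearIndependent_iff']
  intro s c hc i hi
  have hprod : ∏ j ∈ s, x j ^ c j = 1 := by
    simpa [toMul_sum, toMul_zsmul] using congrArg Additive.toMul hc
  -- Writing `c = c⁺ - c⁻` turns the relation into an equality of two monomials in the `x j`.
  have hunits : ∏ j ∈ s, x j ^ (c j).toNat = ∏ j ∈ s, x j ^ (-c j).toNat := by
    rw [← div_eq_one, ← Finset.prod_div_distrib, ← hprod]
    refine Finset.prod_congr rfl fun j _ => ?_
    rw [← zpow_natCast, ← zpow_natCast, div_eq_mul_inv, ← zpow_sub, Int.toNat_sub_toNat_neg]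
  have hmonomial (a : ι → ℕ) :
      ∏ j ∈ s, X j ^ a j = monomial (∑ j ∈ s, Finsupp.single j (a j)) (1 : R) := by
    simp only [monomial_sum_one, X_pow_eq_monomial]
  have hexponents : ∑ j ∈ s, Finsupp.single j (c j).toNat =
      ∑ j ∈ s, Finsupp.single j (-c j).toNat := by
    refine monomial_left_injective (one_ne_zero (α := R)) ?_
    simp only [← hmonomial]
    refine hx ?_
    simpa [map_prod] using congrArg Units.val hunits
  have hi_exponent := congrArg (· i) hexponents
  simp only [Finsupp.finsetSum_apply, Finsupp.single_apply, Finset.sum_ite_eq', hi,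
    ↓reduceIte] at hi_exponent
  omega

section IntSubmodule

variable {M : Type*} [CommGroup M]

def _root_.Subgroup.toIntSubmodule : Subgroup M ≃o Submodule ℤ (Additive M) :=
  Subgroup.toAddSubgroup.trans AddSubgroup.toIntSubmodule

theorem _root_.Subgroup.toIntSubmodule_closure (s : Set M) :
    (Subgroup.closure s).toIntSubmodule = span ℤ (Additive.toMul ⁻¹' s) := by
  rw [Subgroup.toIntSubmodule, OrderIso.trans_apply, Subgroup.toAddSubgroup_closure,
    ← span_int_eq_addSubgroupClosure]
  rfl

end IntSubmodule

omit [CharZero K] in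
theorem grpRank_eq_rank_toIntSubmodule (S : Subgroup Kˣ) :
    grpRank S = Module.rank ℤ S.toIntSubmodule :=
  rfl

omit [CharZero K] in
theorem grpRank_mono {S T : Subgroup Kˣ} (h : S ≤ T) : grpRank S ≤ grpRank T :=
  Submodule.rank_mono (Subgroup.toIntSubmodule.monotone h)

omit [CharZero K] in
theorem FiniteRank.mono {S T : Subgroup Kˣ} (hT : FiniteRank T) (h : S ≤ T) : FiniteRank S :=
  (grpRank_mono h).trans_lt hT

omit [CharZero K] in
theorem FiniteRank.sup {S T : Subgroup Kˣ} (hS : FiniteRank S) (hT : FiniteRank T) :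
    FiniteRank (S ⊔ T) := by
  unfold FiniteRank at *
  rw [grpRank_eq_rank_toIntSubmodule, OrderIso.map_sup]
  exact (rank_add_le_rank_add_rank _ _).trans_lt (add_lt_aleph0 hS hT)

omit [CharZero K] in
theorem finiteRank_closure {s : Set Kˣ} (hs : s.Finite) : FiniteRank (Subgroup.closure s) := by
  unfold FiniteRank
  rw [grpRank_eq_rank_toIntSubmodule, Subgroup.toIntSubmodule_closure]
  exact (rank_span_le _).trans_lt
    (lt_aleph0_iff_set_finite.2 (hs.preimage Additive.toMul.injective.injOn))

omit [CharZero K] in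
theorem FiniteRank.exists_grpRank_closure_eq {H : Subgroup Kˣ} (hH : FiniteRank H) :
    ∃ (k : ℕ) (g : Fin k → Kˣ),
      Subgroup.closure (Set.range g) ≤ H ∧
        grpRank (Subgroup.closure (Set.range g)) = grpRank H := by
  obtain ⟨s, hs_fin, hsH, hrank⟩ := H.toIntSubmodule.exists_finite_subset_rank_le_rank_span hH
  obtain ⟨k, g, hg⟩ := (hs_fin.image Additive.toMul).fin_embedding
  have hgH : Subgroup.closure (Set.range g) ≤ H := by
    rw [Subgroup.closure_le, hg]
    rintro _ ⟨x, hx, rfl⟩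
    exact hsH hx
  refine ⟨k, g, hgH, (grpRank_mono hgH).antisymm ?_⟩
  rw [grpRank_eq_rank_toIntSubmodule, grpRank_eq_rank_toIntSubmodule,
    Subgroup.toIntSubmodule_closure]
  refine hrank.trans (Submodule.rank_mono (span_mono fun x hx => ?_))
  simp [hg, hx]

theorem tdSet_le {s : Set K} {c : Cardinal}
    (h : ∀ t ⊆ s, AlgebraicIndependent ℚ ((↑) : t → K) → #t ≤ c) : tdSet s ≤ c :=
  ciSup_le' fun t => h t.1 t.2.1 t.2.2

theorem tdSet_mono {s t : Set K} (h : s ⊆ t) : tdSet s ≤ tdSet t :=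
  tdSet_le fun u hu hind => le_ciSup_of_le bddAbove_of_small ⟨u, hu.trans h, hind⟩ le_rfl

theorem td_mono {S T : Subgroup Kˣ} (h : S ≤ T) : td S ≤ td T :=
  tdSet_mono (Set.image_mono h)

theorem td_le_grpRank (S : Subgroup Kˣ) : td S ≤ grpRank S := by
  refine tdSet_le fun t ht hind => ?_
  choose y hyS hy using fun i : t => ht i.2
  have hli : LinearIndependent ℤ fun i => Additive.ofMul (y i) :=
    AlgebraicIndependent.linearIndependent_ofMul_units (by simpa [hy] using hind)
  exact (LinearIndependent.of_comp (MonoidHom.toAdditive S.subtype).toIntLinearMap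
    (v := fun i => Additive.ofMul (⟨y i, hyS i⟩ : S)) hli).cardinal_le_rank

theorem FiniteRank.td_lt_aleph0 {S : Subgroup Kˣ} (hS : FiniteRank S) : td S < ℵ₀ :=
  (td_le_grpRank S).trans_lt hS

theorem delta_le_delta_of_le {G V W : Subgroup Kˣ} (hW : FiniteRank W) (hVW : V ≤ W)
    (hrank : grpRank (W ⊓ G) ≤ grpRank (V ⊓ G)) : delta G V ≤ delta G W := by
  have htd : (td V).toNat ≤ (td W).toNat := toNat_le_toNat (td_mono hVW) hW.td_lt_aleph0
  have hrank_eq : grpRank (V ⊓ G) = grpRank (W ⊓ G) :=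
    (grpRank_mono (inf_le_inf_right G hVW)).antisymm hrank
  unfold delta
  rw [hrank_eq]
  omega

/-- Strongness can be checked on green points: a finite-rank subgroup `Y` of `Kˣ` is strong
if and only if for every finite tuple `g₁, …, g_k` of elements of `G` one has
`δ(Y·⟨g₁, …, g_k⟩) ≥ δ(Y)`. -/
theorem strong_iff_green_tuples {K : Type*} [Field K] [CharZero K] (G Y : Subgroup Kˣ)
    (hfr : FiniteRank Y) :
    Strong G Y ↔
      ∀ (k : ℕ) (g : Fin k → Kˣ), (∀ i, g i ∈ G) →
        delta G Y ≤ delta G (Y ⊔ Subgroup.closure (Set.range g)) := by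
  refine ⟨fun hY k g _ => hY _ (hfr.sup (finiteRank_closure (Set.finite_range g)))
    le_sup_left le_top, fun h W hW hYW _ => ?_⟩
  obtain ⟨k, g, hgWG, hrank⟩ := (hW.mono inf_le_left).exists_grpRank_closure_eq (H := W ⊓ G)
  have hgG : ∀ i, g i ∈ G := fun i => (hgWG (Subgroup.subset_closure (Set.mem_range_self i))).2
  calc delta G Y ≤ delta G (Y ⊔ Subgroup.closure (Set.range g)) := h k g hgG
    _ ≤ delta G W := by
      refine delta_le_delta_of_le hW (sup_le hYW (hgWG.trans inf_le_left)) ?_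
      exact hrank.ge.trans (grpRank_mono (le_inf le_sup_right (hgWG.trans inf_le_right)))

end GreenPoints

end
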